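/- For rooted binary trees T_a, T_b on k labeled tips with positive branch lengths, if for every pair of tips i,j the path length from the root to the MRCA of i and j agrees between T_a and T_b, and the pendant branch length to each tip agrees, then T_a = T_b (same topology and all branch lengths equal). -/

import Mathlib

/-- Rooted binary trees with tips labeled by `Fin k`; each internal node
stores the branch lengths of the edges to its two children. -/
inductive RTree (k : ℕ) : Type
  | leaf : Fin k → RTree k
  | node : ℝ → RTree k → ℝ → RTree k → RTree k

namespace RTree

variable {k : ℕ}

/-- The list of tip labels of a tree. -/
def tipList : RTree k → List (Fin k)
  | leaf i => [i]
  | node _ l _ r => l.tipList ++ r.tipList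

/-- The set of tip labels of a tree. -/
def tips (T : RTree k) : Finset (Fin k) := T.tipList.toFinset

/-- `T` is a phylogenetic tree on `k` labeled tips: each label occurs exactly once. -/
def IsPhylo (T : RTree k) : Prop := T.tipList.Nodup ∧ ∀ i : Fin k, i ∈ T.tipList

/-- All branch lengths are positive. -/
def PosLens : RTree k → Prop
  | leaf _ => True
  | node a l b r => 0 < a ∧ 0 < b ∧ PosLens l ∧ PosLens r

/-- All branch lengths are nonnegative. -/
def NonnegLens : RTree k → Prop
  | leaf _ => True
  | node a l b r => 0 ≤ a ∧ 0 ≤ b ∧ NonnegLens l ∧ NonnegLens r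

/-- All branch lengths are at most `ε`. -/
def LensLE (ε : ℝ) : RTree k → Prop
  | leaf _ => True
  | node a l b r => a ≤ ε ∧ b ≤ ε ∧ LensLE ε l ∧ LensLE ε r

/-- All branch lengths are equal to `1`. -/
def UnitLens : RTree k → Prop
  | leaf _ => True
  | node a l b r => a = 1 ∧ b = 1 ∧ UnitLens l ∧ UnitLens r

/-- `m T i j`: the number of edges on the path from the root to the
most recent common ancestor of tips `i` and `j`. -/
def m : RTree k → Fin k → Fin k → ℕ
  | leaf _, _, _ => 0
  | node _ l _ r, i, j =>
      if i ∈ l.tips ∧ j ∈ l.tips then m l i j + 1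
      else if i ∈ r.tips ∧ j ∈ r.tips then m r i j + 1
      else 0

/-- `Mlen T i j`: the sum of branch lengths on the path from the root to the
most recent common ancestor of tips `i` and `j`. -/
def Mlen : RTree k → Fin k → Fin k → ℝ
  | leaf _, _, _ => 0
  | node a l b r, i, j =>
      if i ∈ l.tips ∧ j ∈ l.tips then Mlen l i j + a
      else if i ∈ r.tips ∧ j ∈ r.tips then Mlen r i j + b
      else 0

/-- Whether the tree is a single leaf. -/
def isLeaf : RTree k → Bool
  | leaf _ => true
  | node _ _ _ _ => false

/-- `pend T i`: the length of the pendant edge leading to tip `i`. -/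
def pend : RTree k → Fin k → ℝ
  | leaf _, _ => 0
  | node a l b r, i =>
      if i ∈ l.tips then (if l.isLeaf then a else pend l i)
      else if i ∈ r.tips then (if r.isLeaf then b else pend r i)
      else 0

/-- The set of clades (tip sets of rooted subtrees) of a tree.  Two rooted
trees have the same topology iff they have the same set of clades, i.e. their
internal edges induce the same tip partitions. -/
def clades : RTree k → Set (Finset (Fin k))
  | leaf i => {{i}}
  | node a l b r => insert (node a l b r).tips (clades l ∪ clades r)

/-- Equality of rooted trees: same topology (ignoring the left/right order of
children) and equal corresponding branch lengths. -/
inductive TreeEq : RTree k → RTree k → Prop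
  | leaf (i : Fin k) : TreeEq (.leaf i) (.leaf i)
  | node {l l' r r' : RTree k} (a b : ℝ) :
      TreeEq l l' → TreeEq r r' → TreeEq (.node a l b r) (.node a l' b r')
  | swap {l l' r r' : RTree k} (a b : ℝ) :
      TreeEq l l' → TreeEq r r' → TreeEq (.node a l b r) (.node b r' a l')

/-- `S` is the rooted subtree of `T` hanging at a node at edge-depth `d`. -/
inductive SubtreeAt : RTree k → ℕ → RTree k → Prop
  | refl (T : RTree k) : SubtreeAt T 0 T
  | left {l S : RTree k} {d : ℕ} (a b : ℝ) (r : RTree k) :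
      SubtreeAt l d S → SubtreeAt (.node a l b r) (d + 1) S
  | right {r S : RTree k} {d : ℕ} (a b : ℝ) (l : RTree k) :
      SubtreeAt r d S → SubtreeAt (.node a l b r) (d + 1) S

/-- Relabel the tips of a tree by a permutation. -/
def relabel (σ : Equiv.Perm (Fin k)) : RTree k → RTree k
  | leaf i => leaf (σ i)
  | node a l b r => node a (relabel σ l) b (relabel σ r)

/-- The set of unordered pairs of distinct tips, represented by ordered pairs `(i, j)` with `i < j`. -/
def tipPairs (k : ℕ) : Finset (Fin k × Fin k) :=
  Finset.univ.filter (fun p => p.1 < p.2)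

/-- The `λ`-entry of the tree vector `v_λ(T)` at the pair `(i, j)`:
`(1 − λ) m_{i,j} + λ M_{i,j}`. -/
noncomputable def vPair (lam : ℝ) (T : RTree k) (i j : Fin k) : ℝ :=
  (1 - lam) * (T.m i j : ℝ) + lam * T.Mlen i j

/-- The `λ`-entry of the tree vector `v_λ(T)` at tip `i`: `(1 − λ) · 1 + λ p_i`. -/
noncomputable def vTip (lam : ℝ) (T : RTree k) (i : Fin k) : ℝ :=
  (1 - lam) * 1 + lam * T.pend i

/-- The metric `d_λ(T_a, T_b) = ‖v_λ(T_a) − v_λ(T_b)‖₂`. -/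
noncomputable def treeDist (lam : ℝ) (Ta Tb : RTree k) : ℝ :=
  Real.sqrt
    ((∑ p ∈ tipPairs k, (vPair lam Ta p.1 p.2 - vPair lam Tb p.1 p.2) ^ 2) +
      ∑ i : Fin k, (vTip lam Ta i - vTip lam Tb i) ^ 2)

/-- `‖m(T_a) − m(T_b)‖₂`, the Euclidean distance between the topology vectors
(the final `k` entries of `m` are all `1` and contribute nothing). -/
noncomputable def mDist (Ta Tb : RTree k) : ℝ :=
  Real.sqrt (∑ p ∈ tipPairs k, ((Ta.m p.1 p.2 : ℝ) - (Tb.m p.1 p.2 : ℝ)) ^ 2)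

/-- `‖M(T_a) − M(T_b)‖₂`, the Euclidean distance between the
branch-length vectors (root-to-MRCA path lengths and pendant lengths). -/
noncomputable def MDist (Ta Tb : RTree k) : ℝ :=
  Real.sqrt
    ((∑ p ∈ tipPairs k, (Ta.Mlen p.1 p.2 - Tb.Mlen p.1 p.2) ^ 2) +
      ∑ i : Fin k, (Ta.pend i - Tb.pend i) ^ 2)

/-- `D_λ(T_a,T_b) = (1−λ)‖m(T_a)−m(T_b)‖₂ + λ‖M(T_a)−M(T_b)‖₂`. -/
noncomputable def DDist (lam : ℝ) (Ta Tb : RTree k) : ℝ :=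
  (1 - lam) * mDist Ta Tb + lam * MDist Ta Tb

end RTree

/-! With positive branch lengths, `M_{ij} > 0` exactly when `i` and `j` lie in the same child
subtree of the root, so `M` determines the root split. The length `e` of the edge above a child
`c` is the least value of `M` on pairs of tips of `c`: it is attained by a pair whose MRCA is the
root of `c`, or by the pair `(i, i)` when `c` is the leaf `i`, because `M_{ii}` is the root-to-tip
distance. Subtracting `e` leaves the `M`-data of `c`, and induction finishes the argument. -/

namespace RTree

variable {k : ℕ} {a b : ℝ} {l r T : RTree k} {i j : Fin k}

@[simp]
lemma tips_leaf : (leaf i : RTree k).tips = {i} := rfl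

@[simp]
lemma tips_node : (node a l b r).tips = l.tips ∪ r.tips := by
  simp [tips, tipList]

lemma tips_nonempty : ∀ T : RTree k, T.tips.Nonempty
  | leaf i => ⟨i, by simp⟩
  | node _ l _ _ => (tips_nonempty l).mono (by simp)

lemma nodup_tipList_left (h : (node a l b r).tipList.Nodup) : l.tipList.Nodup :=
  (List.nodup_append'.mp h).1

lemma nodup_tipList_right (h : (node a l b r).tipList.Nodup) : r.tipList.Nodup :=
  (List.nodup_append'.mp h).2.1

lemma disjoint_tips_of_nodup (h : (node a l b r).tipList.Nodup) : Disjoint l.tips r.tips :=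
  List.disjoint_toFinset_iff_disjoint.mpr (List.disjoint_of_nodup_append h)

lemma eq_leaf_of_tips_eq_singleton (h : T.tipList.Nodup) (hT : T.tips = {i}) : T = leaf i := by
  cases T with
  | leaf j => rw [Finset.singleton_inj.mp hT]
  | node a l b r =>
    obtain ⟨x, hx⟩ := tips_nonempty l
    obtain ⟨y, hy⟩ := tips_nonempty r
    have hxi : x = i := Finset.mem_singleton.mp (hT ▸ (by simp [hx]))
    have hyi : y = i := Finset.mem_singleton.mp (hT ▸ (by simp [hy]))
    subst hxi hyi
    exact absurd hy (Finset.disjoint_left.mp (disjoint_tips_of_nodup h) hx)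

lemma PosLens.nonnegLens : ∀ {T : RTree k}, T.PosLens → T.NonnegLens
  | leaf _, _ => trivial
  | node _ _ _ _, ⟨ha, hb, hl, hr⟩ => ⟨ha.le, hb.le, hl.nonnegLens, hr.nonnegLens⟩

lemma Mlen_comm (T : RTree k) (i j : Fin k) : T.Mlen i j = T.Mlen j i := by
  induction T with
  | leaf => rfl
  | node a l b r ihl ihr => simp only [Mlen, ihl, ihr, and_comm]

lemma Mlen_node_of_mem_left (hi : i ∈ l.tips) (hj : j ∈ l.tips) :
    (node a l b r).Mlen i j = l.Mlen i j + a := by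
  simp [Mlen, hi, hj]

lemma Mlen_node_of_mem_right (hlr : Disjoint l.tips r.tips) (hi : i ∈ r.tips)
    (hj : j ∈ r.tips) : (node a l b r).Mlen i j = r.Mlen i j + b := by
  simp [Mlen, hi, hj, Finset.disjoint_right.mp hlr hi]

lemma Mlen_node_eq_zero (hlr : Disjoint l.tips r.tips) (hi : i ∈ l.tips) (hj : j ∈ r.tips) :
    (node a l b r).Mlen i j = 0 := by
  simp [Mlen, Finset.disjoint_left.mp hlr hi, Finset.disjoint_right.mp hlr hj]

lemma NonnegLens.Mlen_nonneg (hT : T.NonnegLens) (i j : Fin k) : 0 ≤ T.Mlen i j := by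
  induction T with
  | leaf => exact le_rfl
  | node a l b r ihl ihr =>
    obtain ⟨ha, hb, hl, hr⟩ := hT
    simp only [Mlen]
    split_ifs
    exacts [add_nonneg (ihl hl) ha, add_nonneg (ihr hr) hb, le_rfl]

lemma exists_Mlen_eq_zero (h : T.tipList.Nodup) : ∃ i ∈ T.tips, ∃ j ∈ T.tips, T.Mlen i j = 0 := by
  cases T with
  | leaf i => exact ⟨i, by simp, i, by simp, rfl⟩
  | node a l b r =>
    obtain ⟨i, hi⟩ := tips_nonempty l
    obtain ⟨j, hj⟩ := tips_nonempty r
    exact ⟨i, by simp [hi], j, by simp [hj], Mlen_node_eq_zero (disjoint_tips_of_nodup h) hi hj⟩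

/-- With positive branch lengths, the tips of the root's child containing `i`. -/
noncomputable def sideOf (T : RTree k) (i : Fin k) : Finset (Fin k) :=
  T.tips.filter fun j => 0 < T.Mlen i j

lemma sideOf_node_of_mem_left (hlr : Disjoint l.tips r.tips) (ha : 0 < a) (hl : l.NonnegLens)
    (hi : i ∈ l.tips) : (node a l b r).sideOf i = l.tips := by
  ext j
  simp only [sideOf, Finset.mem_filter, tips_node, Finset.mem_union]
  constructor
  · rintro ⟨hj | hj, hpos⟩
    · exact hj
    · exact absurd hpos (by rw [Mlen_node_eq_zero hlr hi hj]; exact lt_irrefl 0)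
  · intro hj
    rw [Mlen_node_of_mem_left hi hj]
    exact ⟨Or.inl hj, add_pos_of_nonneg_of_pos (hl.Mlen_nonneg i j) ha⟩

lemma sideOf_node_of_mem_right (hlr : Disjoint l.tips r.tips) (hb : 0 < b) (hr : r.NonnegLens)
    (hi : i ∈ r.tips) : (node a l b r).sideOf i = r.tips := by
  ext j
  simp only [sideOf, Finset.mem_filter, tips_node, Finset.mem_union]
  constructor
  · rintro ⟨hj | hj, hpos⟩
    · exact absurd hpos (by rw [Mlen_comm, Mlen_node_eq_zero hlr hj hi]; exact lt_irrefl 0)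
    · exact hj
  · intro hj
    rw [Mlen_node_of_mem_right hlr hi hj]
    exact ⟨Or.inr hj, add_pos_of_nonneg_of_pos (hr.Mlen_nonneg i j) hb⟩

lemma sideOf_congr {T T' : RTree k} (htips : T.tips = T'.tips)
    (hM : ∀ i ∈ T.tips, ∀ j ∈ T.tips, T.Mlen i j = T'.Mlen i j) (hi : i ∈ T.tips) :
    T.sideOf i = T'.sideOf i := by
  rw [sideOf, sideOf, ← htips]
  exact Finset.filter_congr fun j hj => by rw [hM i hi j hj]

lemma tips_children_eq_or_swap {a' b' : ℝ} {l' r' : RTree k}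
    (hna : (node a l b r).tipList.Nodup) (hnb : (node a' l' b' r').tipList.Nodup)
    (hpa : (node a l b r).PosLens) (hpb : (node a' l' b' r').PosLens)
    (htips : (node a l b r).tips = (node a' l' b' r').tips)
    (hM : ∀ i ∈ (node a l b r).tips, ∀ j ∈ (node a l b r).tips,
      (node a l b r).Mlen i j = (node a' l' b' r').Mlen i j) :
    l.tips = l'.tips ∧ r.tips = r'.tips ∨ l.tips = r'.tips ∧ r.tips = l'.tips := by
  have hd := disjoint_tips_of_nodup hna
  have hd' := disjoint_tips_of_nodup hnb
  obtain ⟨i, hi⟩ := tips_nonempty l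
  have hiT : i ∈ (node a l b r).tips := by simp [hi]
  have hside := sideOf_congr htips hM hiT
  rw [sideOf_node_of_mem_left hd hpa.1 hpa.2.2.1.nonnegLens hi] at hside
  have hr : r.tips = (node a l b r).tips \ l.tips := by
    rw [tips_node, Finset.union_sdiff_cancel_left hd]
  rcases Finset.mem_union.mp (tips_node ▸ htips ▸ hiT) with hi' | hi'
  · rw [sideOf_node_of_mem_left hd' hpb.1 hpb.2.2.1.nonnegLens hi'] at hside
    refine .inl ⟨hside, ?_⟩
    rw [hr, htips, hside, tips_node, Finset.union_sdiff_cancel_left hd']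
  · rw [sideOf_node_of_mem_right hd' hpb.2.1 hpb.2.2.2.nonnegLens hi'] at hside
    refine .inr ⟨hside, ?_⟩
    rw [hr, htips, hside, tips_node, Finset.union_sdiff_cancel_right hd']

lemma eq_of_Mlen_add_eq {c c' : RTree k} {e e' : ℝ}
    (hc : c.tipList.Nodup) (hc' : c'.tipList.Nodup) (hcn : c.NonnegLens) (hcn' : c'.NonnegLens)
    (htips : c.tips = c'.tips) (h : ∀ i ∈ c.tips, ∀ j ∈ c.tips, c.Mlen i j + e = c'.Mlen i j + e') :
    e = e' ∧ ∀ i ∈ c.tips, ∀ j ∈ c.tips, c.Mlen i j = c'.Mlen i j := by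
  obtain ⟨i, hi, j, hj, hzero⟩ := exists_Mlen_eq_zero hc
  obtain ⟨i', hi', j', hj', hzero'⟩ := exists_Mlen_eq_zero hc'
  rw [← htips] at hi' hj'
  have h₁ := h i hi j hj
  have h₂ := h i' hi' j' hj'
  have hee : e = e' := by
    linarith [hcn.Mlen_nonneg i' j', hcn'.Mlen_nonneg i j]
  exact ⟨hee, fun i hi j hj => by linarith [h i hi j hj]⟩

theorem treeEq_of_Mlen_eqOn {Ta Tb : RTree k} (hna : Ta.tipList.Nodup) (hnb : Tb.tipList.Nodup)
    (hpa : Ta.PosLens) (hpb : Tb.PosLens) (htips : Ta.tips = Tb.tips)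
    (hM : ∀ i ∈ Ta.tips, ∀ j ∈ Ta.tips, Ta.Mlen i j = Tb.Mlen i j) : TreeEq Ta Tb := by
  induction Ta generalizing Tb with
  | leaf i =>
    obtain rfl := eq_leaf_of_tips_eq_singleton hnb (htips.symm.trans tips_leaf)
    exact .leaf i
  | node a l b r ihl ihr =>
    cases Tb with
    | leaf j => cases eq_leaf_of_tips_eq_singleton hna htips
    | node a' l' b' r' =>
      have hd := disjoint_tips_of_nodup hna
      have hd' := disjoint_tips_of_nodup hnb
      have hMl : ∀ i ∈ l.tips, ∀ j ∈ l.tips, l.Mlen i j + a = (node a' l' b' r').Mlen i j :=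
        fun i hi j hj => by
          rw [← Mlen_node_of_mem_left hi hj]; exact hM i (by simp [hi]) j (by simp [hj])
      have hMr : ∀ i ∈ r.tips, ∀ j ∈ r.tips, r.Mlen i j + b = (node a' l' b' r').Mlen i j :=
        fun i hi j hj => by
          rw [← Mlen_node_of_mem_right hd hi hj]; exact hM i (by simp [hi]) j (by simp [hj])
      have hnal := nodup_tipList_left hna
      have hnar := nodup_tipList_right hna
      have hnbl := nodup_tipList_left hnb
      have hnbr := nodup_tipList_right hnb
      have hsplit := tips_children_eq_or_swap hna hnb hpa hpb htips hM
      obtain ⟨-, -, hl, hr⟩ := hpa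
      obtain ⟨-, -, hl', hr'⟩ := hpb
      rcases hsplit with ⟨hll, hrr⟩ | ⟨hlr, hrl⟩
      · obtain ⟨rfl, hlM⟩ := eq_of_Mlen_add_eq hnal hnbl hl.nonnegLens hl'.nonnegLens hll
          fun i hi j hj => by rw [hMl i hi j hj, Mlen_node_of_mem_left (hll ▸ hi) (hll ▸ hj)]
        obtain ⟨rfl, hrM⟩ := eq_of_Mlen_add_eq hnar hnbr hr.nonnegLens hr'.nonnegLens hrr
          fun i hi j hj => by rw [hMr i hi j hj, Mlen_node_of_mem_right hd' (hrr ▸ hi) (hrr ▸ hj)]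
        exact .node a b (ihl hnal hnbl hl hl' hll hlM) (ihr hnar hnbr hr hr' hrr hrM)
      · obtain ⟨rfl, hlM⟩ := eq_of_Mlen_add_eq hnal hnbr hl.nonnegLens hr'.nonnegLens hlr
          fun i hi j hj => by rw [hMl i hi j hj, Mlen_node_of_mem_right hd' (hlr ▸ hi) (hlr ▸ hj)]
        obtain ⟨rfl, hrM⟩ := eq_of_Mlen_add_eq hnar hnbl hr.nonnegLens hl'.nonnegLens hrl
          fun i hi j hj => by rw [hMr i hi j hj, Mlen_node_of_mem_left (hrl ▸ hi) (hrl ▸ hj)]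
        exact .swap a b (ihl hnal hnbr hl hr' hlr hlM) (ihr hnar hnbl hr hl' hrl hrM)

lemma IsPhylo.tips_eq_univ {T : RTree k} (h : T.IsPhylo) : T.tips = Finset.univ :=
  Finset.eq_univ_iff_forall.mpr fun i => List.mem_toFinset.mpr (h.2 i)

end RTree

open RTree in
theorem same_M_implies_equal_general {k : ℕ} (Ta Tb : RTree k)
    (ha : Ta.IsPhylo) (hb : Tb.IsPhylo)
    (hpa : Ta.PosLens) (hpb : Tb.PosLens)
    (hM : ∀ i j : Fin k, Ta.Mlen i j = Tb.Mlen i j) :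
    TreeEq Ta Tb :=
  treeEq_of_Mlen_eqOn ha.1 hb.1 hpa hpb (ha.tips_eq_univ.trans hb.tips_eq_univ.symm)
    fun i _ j _ => hM i j

open RTree in
/-- if all root-to-MRCA path lengths and all pendant branch
lengths agree, the trees are equal (same topology and branch lengths). -/
theorem same_M_implies_equal {k : ℕ} (Ta Tb : RTree k)
    (ha : Ta.IsPhylo) (hb : Tb.IsPhylo)
    (hpa : Ta.PosLens) (hpb : Tb.PosLens)
    (hM : ∀ i j : Fin k, Ta.Mlen i j = Tb.Mlen i j)
    (hp : ∀ i : Fin k, Ta.pend i = Tb.pend i) :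
    TreeEq Ta Tb :=
  same_M_implies_equal_general Ta Tb ha hb hpa hpb hM
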